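/- Let M be an n × n real matrix, let k < n, and let H = span(Me_{k+1}, …, Me_n), where e_1, …, e_n is the standard basis of ℝⁿ. Then the smallest singular value of M satisfies s_n(M) ≤ min_{j=1,…,k} ‖P_{H^⊥} M e_j‖₂, where P_{H^⊥} denotes the orthogonal projection of ℝⁿ onto the orthogonal complement of H. -/

import Mathlib

open Matrix

/-- The smallest singular value of an `n × n` real matrix, i.e.
`√λ_min(MMᵀ) = min_{‖x‖₂ = 1} ‖Mᵀ x‖₂`. -/
noncomputable def sMin {n N : ℕ} (A : Matrix (Fin n) (Fin N) ℝ) : ℝ :=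
  ⨅ x : {x : EuclideanSpace ℝ (Fin n) // ‖x‖ = 1},
    ‖Matrix.toEuclideanLin Aᵀ (x : EuclideanSpace ℝ (Fin n))‖

/-! Put `A = toEuclideanLin M` and `U = span {e_i : k ≤ i}`, so that `H = A U`. The component of
`A e_j` orthogonal to `H` is `A (e_j - u)` for some `u ∈ U`, and `‖e_j - u‖ ≥ 1` because
`e_j ⊥ U`. It remains to see that `s_n(M) ‖w‖ ≤ ‖M w‖` for every `w`: `sMin` is the lower bound
of `Mᵀ = A†` on the unit sphere, and for a square matrix a positive lower bound of `A†` makes it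
invertible, which transfers the bound to `A`. -/

section NormedSpace

variable {E F : Type*} [NormedAddCommGroup E] [NormedSpace ℝ E]
  [NormedAddCommGroup F] [NormedSpace ℝ F]

theorem iInf_norm_apply_sphere_mul_norm_le (C : E →ₗ[ℝ] F) (v : E) :
    (⨅ x : {x : E // ‖x‖ = 1}, ‖C x‖) * ‖v‖ ≤ ‖C v‖ := by
  rcases eq_or_ne v 0 with rfl | hv
  · simp
  have hv' : 0 < ‖v‖ := norm_pos_iff.mpr hv
  have hunit : ‖‖v‖⁻¹ • v‖ = 1 := by
    rw [norm_smul, norm_inv, norm_norm, inv_mul_cancel₀ hv'.ne']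
  calc (⨅ x : {x : E // ‖x‖ = 1}, ‖C x‖) * ‖v‖ ≤ ‖C (‖v‖⁻¹ • v)‖ * ‖v‖ := by
        gcongr
        exact ciInf_le ⟨0, by rintro _ ⟨x, rfl⟩; positivity⟩ (⟨_, hunit⟩ : {x : E // ‖x‖ = 1})
    _ = ‖C v‖ := by
        rw [map_smul, norm_smul, norm_inv, norm_norm]
        field_simp

end NormedSpace

section InnerProductSpace

variable {E F : Type*} [NormedAddCommGroup E] [InnerProductSpace ℝ E]
  [NormedAddCommGroup F] [InnerProductSpace ℝ F]

theorem iInf_norm_adjoint_sphere_mul_norm_le [FiniteDimensional ℝ E] (B : E →ₗ[ℝ] E) (v : E) :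
    (⨅ x : {x : E // ‖x‖ = 1}, ‖B.adjoint x‖) * ‖v‖ ≤ ‖B v‖ := by
  set c := ⨅ x : {x : E // ‖x‖ = 1}, ‖B.adjoint x‖
  have hlower (x : E) : c * ‖x‖ ≤ ‖B.adjoint x‖ := iInf_norm_apply_sphere_mul_norm_le _ x
  rcases le_or_gt c 0 with hc | hc
  · exact (mul_nonpos_of_nonpos_of_nonneg hc (norm_nonneg v)).trans (norm_nonneg _)
  have hinj : Function.Injective B.adjoint := by
    refine (injective_iff_map_eq_zero _).mpr fun x hx => norm_le_zero_iff.mp ?_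
    have := hlower x
    rw [hx, norm_zero] at this
    exact nonpos_of_mul_nonpos_right this hc
  obtain ⟨y, rfl⟩ := LinearMap.injective_iff_surjective.mp hinj v
  rcases eq_or_ne y 0 with rfl | hy
  · simp
  -- `c ‖B† y‖ ‖y‖ ≤ ‖B† y‖² = ⟪y, B B† y⟫ ≤ ‖y‖ ‖B B† y‖`
  have hcs : ‖B.adjoint y‖ ^ 2 ≤ ‖y‖ * ‖B (B.adjoint y)‖ := by
    rw [← real_inner_self_eq_norm_sq, LinearMap.adjoint_inner_left]
    exact real_inner_le_norm _ _
  refine le_of_mul_le_mul_left ?_ (norm_pos_iff.mpr hy)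
  nlinarith [hlower y, norm_nonneg (B.adjoint y)]

theorem norm_le_norm_sub_of_mem_orthogonal {U : Submodule ℝ E} {e u : E} (he : e ∈ Uᗮ)
    (hu : u ∈ U) : ‖e‖ ≤ ‖e - u‖ := by
  have h := norm_sub_sq_eq_norm_sq_add_norm_sq_real (Submodule.inner_left_of_mem_orthogonal hu he)
  refine (mul_self_le_mul_self_iff (norm_nonneg _) (norm_nonneg _)).mpr ?_
  rw [h]
  exact le_add_of_nonneg_right (mul_self_nonneg _)

theorem exists_mem_apply_sub_eq_starProjection_orthogonal_map (A : E →ₗ[ℝ] F)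
    (U : Submodule ℝ E) [(U.map A).HasOrthogonalProjection] (e : E) :
    ∃ u ∈ U, A (e - u) = (U.map A)ᗮ.starProjection (A e) := by
  obtain ⟨u, hu, hAu⟩ := Submodule.mem_map.mp ((U.map A).starProjection_apply_mem (A e))
  exact ⟨u, hu, by rw [map_sub, hAu, Submodule.starProjection_orthogonal_val]⟩

end InnerProductSpace

theorem EuclideanSpace.single_mem_orthogonal_span_single {𝕜 ι : Type*} [RCLike 𝕜] [Fintype ι]
    [DecidableEq ι] {p : ι → Prop} {j : ι} (hj : ¬ p j) :
    EuclideanSpace.single j (1 : 𝕜) ∈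
      (Submodule.span 𝕜 {u | ∃ i, p i ∧ u = EuclideanSpace.single i (1 : 𝕜)})ᗮ := by
  have hspan : Submodule.span 𝕜 {u | ∃ i, p i ∧ u = EuclideanSpace.single i (1 : 𝕜)} ≤
      (𝕜 ∙ EuclideanSpace.single j (1 : 𝕜))ᗮ := by
    refine Submodule.span_le.mpr ?_
    rintro _ ⟨i, hi, rfl⟩
    have hji : j ≠ i := by rintro rfl; exact hj hi
    rw [SetLike.mem_coe, Submodule.mem_orthogonal_singleton_iff_inner_right,
      EuclideanSpace.inner_single_left]
    simp [hji]
  exact Submodule.orthogonal_le hspan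
    (Submodule.le_orthogonal_orthogonal _ (Submodule.mem_span_singleton_self _))

theorem sMin_eq_iInf_norm_adjoint {n N : ℕ} (A : Matrix (Fin N) (Fin n) ℝ) :
    sMin A = ⨅ x : {x : EuclideanSpace ℝ (Fin N) // ‖x‖ = 1},
      ‖(Matrix.toEuclideanLin A).adjoint x‖ := by
  simp only [sMin, ← Matrix.toEuclideanLin_conjTranspose_eq_adjoint,
    Matrix.conjTranspose_eq_transpose_of_trivial]

theorem sMin_nonneg {n N : ℕ} (A : Matrix (Fin n) (Fin N) ℝ) : 0 ≤ sMin A :=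
  Real.iInf_nonneg fun _ => norm_nonneg _

theorem sMin_mul_norm_le {n : ℕ} (M : Matrix (Fin n) (Fin n) ℝ) (v : EuclideanSpace ℝ (Fin n)) :
    sMin M * ‖v‖ ≤ ‖Matrix.toEuclideanLin M v‖ := by
  rw [sMin_eq_iInf_norm_adjoint]
  exact iInf_norm_adjoint_sphere_mul_norm_le _ v

theorem smallest_singular_value_le_proj_general
    {n k : ℕ} (M : Matrix (Fin n) (Fin n) ℝ) :
    ∀ j : Fin n, (j : ℕ) < k →
      sMin M ≤
        ‖(Submodule.orthogonalProjectionOnto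
            (Submodule.span ℝ {v : EuclideanSpace ℝ (Fin n) |
                ∃ i : Fin n, k ≤ (i : ℕ) ∧
                  v = Matrix.toEuclideanLin M (EuclideanSpace.single i 1)})ᗮ)
          (Matrix.toEuclideanLin M (EuclideanSpace.single j 1))‖ := by
  intro j hj
  set A := Matrix.toEuclideanLin M
  set U := Submodule.span ℝ {u : EuclideanSpace ℝ (Fin n) |
    ∃ i : Fin n, k ≤ (i : ℕ) ∧ u = EuclideanSpace.single i 1}
  have hH : Submodule.span ℝ {v | ∃ i : Fin n, k ≤ (i : ℕ) ∧ v = A (EuclideanSpace.single i 1)}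
      = U.map A := by
    rw [Submodule.map_span]
    congr 1
    ext v
    simp [eq_comm]
  have hej : EuclideanSpace.single j (1 : ℝ) ∈ Uᗮ :=
    EuclideanSpace.single_mem_orthogonal_span_single (p := fun i : Fin n => k ≤ (i : ℕ)) (by omega)
  obtain ⟨u, hu, hAu⟩ :=
    exists_mem_apply_sub_eq_starProjection_orthogonal_map A U (EuclideanSpace.single j 1)
  rw [hH, Submodule.coe_norm, Submodule.coe_orthogonalProjectionOnto_apply, ← hAu]
  calc sMin M ≤ sMin M * ‖EuclideanSpace.single j (1 : ℝ) - u‖ := by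
        refine le_mul_of_one_le_right (sMin_nonneg M) ?_
        simpa using norm_le_norm_sub_of_mem_orthogonal hej hu
    _ ≤ ‖A (EuclideanSpace.single j 1 - u)‖ := sMin_mul_norm_le M _

/-- **Lemma 4.1.** Let `M` be an `n × n` real matrix and `k < n`.  Let
`H = span(M e_{k+1}, …, M e_n)` (in 0-indexed terms, the columns `M e_i` with `k ≤ i`).
Then the smallest singular value of `M` satisfies
`s_n(M) ≤ ‖P_{H^⊥} M e_j‖₂` for every `j ∈ {1, …, k}` (0-indexed: `j < k`). -/
theorem smallest_singular_value_le_proj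
    {n k : ℕ} (hk : k < n) (M : Matrix (Fin n) (Fin n) ℝ) :
    ∀ j : Fin n, (j : ℕ) < k →
      sMin M ≤
        ‖(Submodule.orthogonalProjectionOnto
            (Submodule.span ℝ {v : EuclideanSpace ℝ (Fin n) |
                ∃ i : Fin n, k ≤ (i : ℕ) ∧
                  v = Matrix.toEuclideanLin M (EuclideanSpace.single i 1)})ᗮ)
          (Matrix.toEuclideanLin M (EuclideanSpace.single j 1))‖ :=
  smallest_singular_value_le_proj_general M
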